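/- For integers n ≥ 3 and m ≥ 2, the F-index of the edge S-join of the cycle C_n and the path P_m is F(C_n ∨̱_S P_m) = n{(m + 2)³ + 6n(m − 1) + mn²} + 12mn + 8m − 10n − 14. -/

import Mathlib

/-- The subdivision graph `S(G)`: a new vertex is inserted into each edge of `G`
(each edge is replaced by a path of length 2). The inserted vertices form the
right summand `↥G.edgeSet`. -/
def Sgraph {V : Type*} (G : SimpleGraph V) : SimpleGraph (V ⊕ ↥G.edgeSet) where
  Adj x y :=
    match x, y with
    | Sum.inl v, Sum.inr e => v ∈ (e : Sym2 V)
    | Sum.inr e, Sum.inl v => v ∈ (e : Sym2 V)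
    | _, _ => False
  symm := by constructor; rintro (v | e) (w | f) h <;> exact h
  loopless := by constructor; rintro (v | e) h <;> exact h

/-- The graph `R(G)`: obtained from `G` by inserting a new vertex into each edge of `G`
and joining each new vertex to the end vertices of its corresponding edge. -/
def Rgraph {V : Type*} (G : SimpleGraph V) : SimpleGraph (V ⊕ ↥G.edgeSet) where
  Adj x y :=
    match x, y with
    | Sum.inl v, Sum.inl w => G.Adj v w
    | Sum.inl v, Sum.inr e => v ∈ (e : Sym2 V)
    | Sum.inr e, Sum.inl v => v ∈ (e : Sym2 V)
    | Sum.inr _, Sum.inr _ => False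
  symm := by
    constructor
    rintro (v | e) (w | f) h
    · exact G.adj_symm h
    · exact h
    · exact h
    · exact h
  loopless := by
    constructor
    rintro (v | e) h
    · exact G.irrefl h
    · exact h

/-- The graph `Q(G)`: obtained from `G` by inserting a new vertex into each edge of `G`,
then joining by edges those pairs of new vertices lying on adjacent edges of `G`. -/
def Qgraph {V : Type*} (G : SimpleGraph V) : SimpleGraph (V ⊕ ↥G.edgeSet) where
  Adj x y :=
    match x, y with
    | Sum.inl _, Sum.inl _ => False
    | Sum.inl v, Sum.inr e => v ∈ (e : Sym2 V)
    | Sum.inr e, Sum.inl v => v ∈ (e : Sym2 V)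
    | Sum.inr e, Sum.inr f => e ≠ f ∧ ∃ v, v ∈ (e : Sym2 V) ∧ v ∈ (f : Sym2 V)
  symm := by
    constructor
    rintro (v | e) (w | f) h
    · exact h
    · exact h
    · exact h
    · exact ⟨h.1.symm, by obtain ⟨v, h1, h2⟩ := h.2; exact ⟨v, h2, h1⟩⟩
  loopless := by
    constructor
    rintro (v | e) h
    · exact h
    · exact h.1 rfl

/-- The total graph `T(G)`: obtained from `G` by inserting a new vertex into each edge,
joining each new vertex to the end vertices of its corresponding edge, and joining by
edges those pairs of new vertices lying on adjacent edges of `G`. -/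
def Tgraph {V : Type*} (G : SimpleGraph V) : SimpleGraph (V ⊕ ↥G.edgeSet) where
  Adj x y :=
    match x, y with
    | Sum.inl v, Sum.inl w => G.Adj v w
    | Sum.inl v, Sum.inr e => v ∈ (e : Sym2 V)
    | Sum.inr e, Sum.inl v => v ∈ (e : Sym2 V)
    | Sum.inr e, Sum.inr f => e ≠ f ∧ ∃ v, v ∈ (e : Sym2 V) ∧ v ∈ (f : Sym2 V)
  symm := by
    constructor
    rintro (v | e) (w | f) h
    · exact G.adj_symm h
    · exact h
    · exact h
    · exact ⟨h.1.symm, by obtain ⟨v, h1, h2⟩ := h.2; exact ⟨v, h2, h1⟩⟩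
  loopless := by
    constructor
    rintro (v | e) h
    · exact G.irrefl h
    · exact h.1 rfl

/-- The disjoint union of `H` and `K` together with all edges joining a vertex `a` of `H`
with `P a` to every vertex of `K`. -/
def joinOn {A B : Type*} (H : SimpleGraph A) (K : SimpleGraph B) (P : A → Prop) :
    SimpleGraph (A ⊕ B) where
  Adj x y :=
    match x, y with
    | Sum.inl a, Sum.inl a' => H.Adj a a'
    | Sum.inr b, Sum.inr b' => K.Adj b b'
    | Sum.inl a, Sum.inr _ => P a
    | Sum.inr _, Sum.inl a => P a
  symm := by
    constructor
    rintro (a | b) (a' | b') h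
    · exact H.adj_symm h
    · exact h
    · exact h
    · exact K.adj_symm h
  loopless := by
    constructor
    rintro (a | b) h
    · exact H.irrefl h
    · exact K.irrefl h

/-- The vertex S-join `G₁ ∨̇_S G₂`: obtained from `S(G₁)` and `G₂` by joining each vertex
of `V(G₁)` to every vertex of `G₂`. -/
def vertexSJoin {V₁ V₂ : Type*} (G₁ : SimpleGraph V₁) (G₂ : SimpleGraph V₂) :
    SimpleGraph ((V₁ ⊕ ↥G₁.edgeSet) ⊕ V₂) :=
  joinOn (Sgraph G₁) G₂ (fun x => x.isLeft)

/-- The edge S-join `G₁ ∨̱_S G₂`: obtained from `S(G₁)` and `G₂` by joining each inserted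
vertex (each vertex of `I(G₁)`) to every vertex of `G₂`. -/
def edgeSJoin {V₁ V₂ : Type*} (G₁ : SimpleGraph V₁) (G₂ : SimpleGraph V₂) :
    SimpleGraph ((V₁ ⊕ ↥G₁.edgeSet) ⊕ V₂) :=
  joinOn (Sgraph G₁) G₂ (fun x => x.isRight)

/-- The vertex R-join `G₁ ∨̇_R G₂`. -/
def vertexRJoin {V₁ V₂ : Type*} (G₁ : SimpleGraph V₁) (G₂ : SimpleGraph V₂) :
    SimpleGraph ((V₁ ⊕ ↥G₁.edgeSet) ⊕ V₂) :=
  joinOn (Rgraph G₁) G₂ (fun x => x.isLeft)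

/-- The edge R-join `G₁ ∨̱_R G₂`. -/
def edgeRJoin {V₁ V₂ : Type*} (G₁ : SimpleGraph V₁) (G₂ : SimpleGraph V₂) :
    SimpleGraph ((V₁ ⊕ ↥G₁.edgeSet) ⊕ V₂) :=
  joinOn (Rgraph G₁) G₂ (fun x => x.isRight)

/-- The vertex Q-join `G₁ ∨̇_Q G₂`. -/
def vertexQJoin {V₁ V₂ : Type*} (G₁ : SimpleGraph V₁) (G₂ : SimpleGraph V₂) :
    SimpleGraph ((V₁ ⊕ ↥G₁.edgeSet) ⊕ V₂) :=
  joinOn (Qgraph G₁) G₂ (fun x => x.isLeft)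

/-- The edge Q-join `G₁ ∨̱_Q G₂`. -/
def edgeQJoin {V₁ V₂ : Type*} (G₁ : SimpleGraph V₁) (G₂ : SimpleGraph V₂) :
    SimpleGraph ((V₁ ⊕ ↥G₁.edgeSet) ⊕ V₂) :=
  joinOn (Qgraph G₁) G₂ (fun x => x.isRight)

/-- The vertex T-join `G₁ ∨̇_T G₂`. -/
def vertexTJoin {V₁ V₂ : Type*} (G₁ : SimpleGraph V₁) (G₂ : SimpleGraph V₂) :
    SimpleGraph ((V₁ ⊕ ↥G₁.edgeSet) ⊕ V₂) :=
  joinOn (Tgraph G₁) G₂ (fun x => x.isLeft)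

/-- The edge T-join `G₁ ∨̱_T G₂`. -/
def edgeTJoin {V₁ V₂ : Type*} (G₁ : SimpleGraph V₁) (G₂ : SimpleGraph V₂) :
    SimpleGraph ((V₁ ⊕ ↥G₁.edgeSet) ⊕ V₂) :=
  joinOn (Tgraph G₁) G₂ (fun x => x.isRight)

/-- Degree of a vertex in a graph on a finite vertex type. -/
noncomputable def gdeg {V : Type*} [Finite V] (G : SimpleGraph V) (v : V) : ℕ :=
  haveI : Fintype ↥(G.neighborSet v) := Fintype.ofFinite _
  G.degree v

/-- The forgotten topological index (F-index): `F(G) = ∑_{v ∈ V(G)} d_G(v)³`. -/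
noncomputable def Findex {V : Type*} [Finite V] (G : SimpleGraph V) : ℕ :=
  haveI := Fintype.ofFinite V
  ∑ v : V, gdeg G v ^ 3

/-- The first Zagreb index: `M₁(G) = ∑_{v ∈ V(G)} d_G(v)²`. -/
noncomputable def M1 {V : Type*} [Finite V] (G : SimpleGraph V) : ℕ :=
  haveI := Fintype.ofFinite V
  ∑ v : V, gdeg G v ^ 2

/-- `M₄(G) = ∑_{v ∈ V(G)} d_G(v)⁴`. -/
noncomputable def M4 {V : Type*} [Finite V] (G : SimpleGraph V) : ℕ :=
  haveI := Fintype.ofFinite V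
  ∑ v : V, gdeg G v ^ 4

/-- The hyper Zagreb index: `HM(G) = ∑_{uv ∈ E(G)} (d_G(u) + d_G(v))²`. -/
noncomputable def HM {V : Type*} [Finite V] (G : SimpleGraph V) : ℕ :=
  haveI : Fintype ↥G.edgeSet := Fintype.ofFinite _
  ∑ e : ↥G.edgeSet,
    Sym2.lift ⟨fun u v => (gdeg G u + gdeg G v) ^ 2,
      fun u v => by dsimp only; rw [add_comm]⟩ (e : Sym2 V)

/-- The redefined Zagreb index:
`ReZM(G) = ∑_{uv ∈ E(G)} d_G(u) d_G(v) (d_G(u) + d_G(v))`. -/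
noncomputable def ReZM {V : Type*} [Finite V] (G : SimpleGraph V) : ℕ :=
  haveI : Fintype ↥G.edgeSet := Fintype.ofFinite _
  ∑ e : ↥G.edgeSet,
    Sym2.lift ⟨fun u v => gdeg G u * gdeg G v * (gdeg G u + gdeg G v),
      fun u v => by dsimp only; ring⟩ (e : Sym2 V)

/-- The number of edges of `G`. -/
noncomputable def numEdges {V : Type*} (G : SimpleGraph V) : ℕ :=
  Nat.card ↥G.edgeSet

/-
In `G₁ ∨̱_S G₂` a vertex of `G₁` keeps its degree, an inserted vertex is adjacent to the two
ends of its edge and to all of `G₂`, and a vertex `b` of `G₂` gains one neighbour per edge of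
`G₁`. Summing cubes gives
`F(G₁ ∨̱_S G₂) = F(G₁) + |E₁| (|V₂| + 2)³ + ∑_{b ∈ V₂} (|E₁| + d_{G₂}(b))³`,
and for `C_n` (all degrees 2, `n` edges) and `P_m` (two ends of degree 1, `m - 2` inner
vertices of degree 2) this evaluates to the stated polynomial.
-/

open SimpleGraph Finset

lemma Sym2.ncard_setOf_mem {α : Type*} {e : Sym2 α} (he : ¬ e.IsDiag) :
    {a | a ∈ e}.ncard = 2 := by
  induction e using Sym2.ind with
  | _ a b =>
    rw [Sym2.mk_isDiag_iff] at he
    have : {v | v ∈ s(a, b)} = {a, b} := by ext v; simp [Sym2.mem_iff]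
    rw [this, Set.ncard_pair he]

lemma Fin.card_filter_val_eq_zero_or_eq_sub_one {m : ℕ} (hm : 2 ≤ m) :
    #{b : Fin m | (b : ℕ) = 0 ∨ (b : ℕ) = m - 1} = 2 :=
  card_eq_two.2 ⟨⟨0, by omega⟩, ⟨m - 1, by omega⟩, by simp only [ne_eq, Fin.ext_iff]; omega,
    by ext; simp [Fin.ext_iff]⟩

namespace SimpleGraph

lemma ncard_setOf_mem_edgeSet {V : Type*} [Fintype V] (G : SimpleGraph V) [DecidableRel G.Adj]
    (v : V) : {e : G.edgeSet | v ∈ (e : Sym2 V)}.ncard = G.degree v := by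
  classical
  have : Subtype.val '' {e : G.edgeSet | v ∈ (e : Sym2 V)} = G.incidenceSet v := by
    ext; simp [incidenceSet, and_comm]
  rw [← Set.ncard_image_of_injective _ Subtype.val_injective, this, ← card_incidenceSet_eq_degree,
    ← Nat.card_eq_fintype_card, Nat.card_coe_set_eq]

lemma card_edgeFinset_cycleGraph (n : ℕ) : #(cycleGraph (n + 3)).edgeFinset = n + 3 := by
  have := (cycleGraph (n + 3)).sum_degrees_eq_twice_card_edges
  simp only [cycleGraph_degree_three_le, sum_const, card_univ, Fintype.card_fin, smul_eq_mul] at this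
  omega

instance (m : ℕ) : DecidableRel (pathGraph m).Adj := fun _ _ => decidable_of_iff' _ pathGraph_adj

lemma pathGraph_degree {m : ℕ} (hm : 2 ≤ m) (b : Fin m) :
    (pathGraph m).degree b = if (b : ℕ) = 0 ∨ (b : ℕ) = m - 1 then 1 else 2 := by
  have hbm := b.isLt
  rw [← card_neighborFinset_eq_degree]
  split_ifs with hb
  · obtain ⟨c, hc⟩ : ∃ c : Fin m, ∀ d : Fin m, (pathGraph m).Adj b d ↔ d = c := by
      rcases hb with hb | hb
      · exact ⟨⟨1, by omega⟩, fun d => by simp only [pathGraph_adj, Fin.ext_iff]; omega⟩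
      · exact ⟨⟨m - 2, by omega⟩, fun d => by simp only [pathGraph_adj, Fin.ext_iff]; omega⟩
    exact card_eq_one.2 ⟨c, by ext d; simp [hc]⟩
  · refine card_eq_two.2 ⟨⟨b - 1, by omega⟩, ⟨b + 1, by omega⟩, by simp [Fin.ext_iff], ?_⟩
    ext d
    simp only [mem_neighborFinset, pathGraph_adj, mem_insert, mem_singleton, Fin.ext_iff]
    omega

lemma sum_pathGraph_degree {m : ℕ} (hm : 2 ≤ m) (f : ℕ → ℕ) :
    ∑ b, f ((pathGraph m).degree b) = 2 * f 1 + (m - 2) * f 2 := by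
  have hcard := card_filter_add_card_filter_not (s := univ)
    (p := fun b : Fin m => (b : ℕ) = 0 ∨ (b : ℕ) = m - 1)
  rw [Fin.card_filter_val_eq_zero_or_eq_sub_one hm, card_univ, Fintype.card_fin] at hcard
  simp only [pathGraph_degree hm, apply_ite f, sum_ite, sum_const, smul_eq_mul,
    Fin.card_filter_val_eq_zero_or_eq_sub_one hm]
  congr
  omega

end SimpleGraph

lemma gdeg_eq_ncard {V : Type*} [Finite V] (G : SimpleGraph V) (v : V) :
    gdeg G v = (G.neighborSet v).ncard := by
  simp only [gdeg, ← card_neighborSet_eq_degree, ← Nat.card_eq_fintype_card, Nat.card_coe_set_eq]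

lemma gdeg_eq_degree {V : Type*} [Fintype V] (G : SimpleGraph V) [DecidableRel G.Adj] (v : V) :
    gdeg G v = G.degree v := by
  unfold gdeg; congr!

lemma Findex_eq_sum {V : Type*} [Fintype V] (G : SimpleGraph V) :
    Findex G = ∑ v, gdeg G v ^ 3 := by
  unfold Findex; congr!

section edgeSJoin

variable {V₁ V₂ : Type*} (G₁ : SimpleGraph V₁) (G₂ : SimpleGraph V₂)

lemma neighborSet_edgeSJoin_inl_inl (v : V₁) :
    (edgeSJoin G₁ G₂).neighborSet (.inl (.inl v)) =
      (Sum.inl ∘ Sum.inr) '' {e : G₁.edgeSet | v ∈ (e : Sym2 V₁)} := by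
  ext ((w | e) | b) <;> simp [mem_neighborSet, edgeSJoin, joinOn, Sgraph]

lemma neighborSet_edgeSJoin_inl_inr (e : G₁.edgeSet) :
    (edgeSJoin G₁ G₂).neighborSet (.inl (.inr e)) =
      (Sum.inl ∘ Sum.inl) '' {v | v ∈ (e : Sym2 V₁)} ∪ Set.range Sum.inr := by
  ext ((w | f) | b) <;> simp [mem_neighborSet, edgeSJoin, joinOn, Sgraph]

lemma neighborSet_edgeSJoin_inr (b : V₂) :
    (edgeSJoin G₁ G₂).neighborSet (.inr b) =
      Set.range (Sum.inl ∘ Sum.inr) ∪ Sum.inr '' G₂.neighborSet b := by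
  ext ((w | f) | c) <;> simp [mem_neighborSet, edgeSJoin, joinOn, Sgraph]

variable [Fintype V₁] [Fintype V₂]

lemma gdeg_edgeSJoin_inl_inl [DecidableRel G₁.Adj] (v : V₁) :
    gdeg (edgeSJoin G₁ G₂) (.inl (.inl v)) = G₁.degree v := by
  rw [gdeg_eq_ncard, neighborSet_edgeSJoin_inl_inl,
    Set.ncard_image_of_injective _ (Sum.inl_injective.comp Sum.inr_injective),
    ncard_setOf_mem_edgeSet]

lemma gdeg_edgeSJoin_inl_inr (e : G₁.edgeSet) :
    gdeg (edgeSJoin G₁ G₂) (.inl (.inr e)) = 2 + Fintype.card V₂ := by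
  rw [gdeg_eq_ncard, neighborSet_edgeSJoin_inl_inr, Set.ncard_union_eq,
    Set.ncard_image_of_injective _ (Sum.inl_injective.comp Sum.inl_injective),
    Set.ncard_range_of_injective Sum.inr_injective,
    Sym2.ncard_setOf_mem (G₁.not_isDiag_of_mem_edgeSet e.2), Nat.card_eq_fintype_card]
  rw [Set.disjoint_left]
  rintro _ ⟨_, -, rfl⟩ ⟨_, ⟨⟩⟩

lemma gdeg_edgeSJoin_inr [DecidableRel G₁.Adj] [DecidableRel G₂.Adj] (b : V₂) :
    gdeg (edgeSJoin G₁ G₂) (.inr b) = #G₁.edgeFinset + G₂.degree b := by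
  rw [gdeg_eq_ncard, neighborSet_edgeSJoin_inr, Set.ncard_union_eq,
    Set.ncard_range_of_injective (Sum.inl_injective.comp Sum.inr_injective),
    Set.ncard_image_of_injective _ Sum.inr_injective, ← gdeg_eq_ncard, gdeg_eq_degree,
    Nat.card_eq_fintype_card, edgeFinset_card]
  rw [Set.disjoint_left]
  rintro _ ⟨_, rfl⟩ ⟨_, -, ⟨⟩⟩

lemma Findex_edgeSJoin [DecidableRel G₁.Adj] [DecidableRel G₂.Adj] :
    Findex (edgeSJoin G₁ G₂) =
      ∑ v, G₁.degree v ^ 3 + #G₁.edgeFinset * (2 + Fintype.card V₂) ^ 3 +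
        ∑ b, (#G₁.edgeFinset + G₂.degree b) ^ 3 := by
  simp only [Findex_eq_sum, Fintype.sum_sum_type, gdeg_edgeSJoin_inl_inl, gdeg_edgeSJoin_inl_inr,
    gdeg_edgeSJoin_inr, sum_const, card_univ, smul_eq_mul, ← edgeFinset_card]

end edgeSJoin

theorem Findex_edgeSJoin_ex13 (n m : ℕ) (hn : 3 ≤ n) (hm : 2 ≤ m) :
    (Findex (edgeSJoin (SimpleGraph.cycleGraph n) (SimpleGraph.pathGraph m)) : ℤ) =
      (n : ℤ) * (((m : ℤ) + 2) ^ 3 + 6 * (n : ℤ) * ((m : ℤ) - 1) + (m : ℤ) * (n : ℤ) ^ 2) + 12 * (m : ℤ) * (n : ℤ) + 8 * (m : ℤ) - 10 * (n : ℤ) - 14 := by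
  obtain ⟨k, rfl⟩ : ∃ k, n = k + 3 := ⟨n - 3, by omega⟩
  rw [Findex_edgeSJoin, card_edgeFinset_cycleGraph,
    sum_pathGraph_degree hm (fun d => (k + 3 + d) ^ 3)]
  simp only [cycleGraph_degree_three_le, sum_const, card_univ, Fintype.card_fin, smul_eq_mul]
  push_cast [Nat.cast_sub hm]
  ring
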